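/- Every reduced spherical convex body R ⊂ S^d of thickness greater than π/2 is smooth, i.e., at every boundary point of R there is exactly one supporting hemisphere. -/

import Mathlib

noncomputable section

/-- Euclidean space ℝⁿ. -/
abbrev Esp (n : ℕ) := EuclideanSpace ℝ (Fin n)

/-- The unit sphere in ℝⁿ. -/
def uSphere (n : ℕ) : Set (Esp n) := {x | ‖x‖ = 1}

/-- Geodesic (angular) distance between unit vectors. -/
def sdist {n : ℕ} (a b : Esp n) : ℝ := Real.arccos (inner ℝ a b : ℝ)

/-- Closed hemisphere with center `m`. -/
def Hemi {n : ℕ} (m : Esp n) : Set (Esp n) := {x ∈ uSphere n | 0 ≤ (inner ℝ m x : ℝ)}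

/-- The great sphere (great circle for n = 3) bounding the hemisphere centered at `m`. -/
def gSphere {n : ℕ} (m : Esp n) : Set (Esp n) := {x ∈ uSphere n | (inner ℝ m x : ℝ) = 0}

/-- The shorter great-circle arc between `a` and `b`: points through which a
minimizing geodesic from `a` to `b` passes. -/
def Arc {n : ℕ} (a b : Esp n) : Set (Esp n) :=
  {x ∈ uSphere n | sdist a x + sdist x b = sdist a b}

/-- Spherically convex set: contained in the sphere, no antipodal pairs, and
closed under taking shorter arcs. -/
def SphConvex {n : ℕ} (C : Set (Esp n)) : Prop :=
  C ⊆ uSphere n ∧ (∀ x ∈ C, -x ∉ C) ∧ ∀ a ∈ C, ∀ b ∈ C, Arc a b ⊆ C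

/-- Interior of a subset of the sphere relative to the sphere. -/
def sphInterior {n : ℕ} (C : Set (Esp n)) : Set (Esp n) :=
  {x ∈ uSphere n | ∃ ε > 0, ∀ y ∈ uSphere n, dist y x < ε → y ∈ C}

/-- Spherical convex body: closed, spherically convex, with nonempty interior
relative to the sphere. -/
def SphBody {n : ℕ} (C : Set (Esp n)) : Prop :=
  SphConvex C ∧ IsClosed C ∧ (sphInterior C).Nonempty

/-- Boundary of a closed subset of the sphere relative to the sphere. -/
def sphBoundary {n : ℕ} (C : Set (Esp n)) : Set (Esp n) := C \ sphInterior C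

/-- `g`, `h` are centers of two distinct non-opposite hemispheres. -/
def IsLune {n : ℕ} (g h : Esp n) : Prop :=
  g ∈ uSphere n ∧ h ∈ uSphere n ∧ g ≠ h ∧ g ≠ -h

/-- The lune determined by hemisphere centers `g` and `h`. -/
def Lune {n : ℕ} (g h : Esp n) : Set (Esp n) := Hemi g ∩ Hemi h

/-- The (d-1)-dimensional hemisphere `G/H` bounding the lune `G ∩ H`:
part of the great sphere of `G` lying in `H`.  (A semicircle when n = 3.) -/
def semic {n : ℕ} (g h : Esp n) : Set (Esp n) :=
  {x ∈ uSphere n | (inner ℝ g x : ℝ) = 0 ∧ 0 ≤ (inner ℝ h x : ℝ)}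

/-- The center of the bounding hemisphere `G/H` of the lune `G ∩ H`:
the normalized projection of `h` onto the hyperplane orthogonal to `g`. -/
def scCenter {n : ℕ} (g h : Esp n) : Esp n :=
  ‖h - (inner ℝ g h : ℝ) • g‖⁻¹ • (h - (inner ℝ g h : ℝ) • g)

/-- Thickness of a lune: distance between the centers of its two bounding
hemispheres. -/
def lthick {n : ℕ} (g h : Esp n) : ℝ := sdist (scCenter g h) (scCenter h g)

/-- Thickness of a convex body: minimal thickness of a lune containing it. -/
def thick {n : ℕ} (C : Set (Esp n)) : ℝ :=
  sInf {t | ∃ g h, IsLune g h ∧ C ⊆ Lune g h ∧ lthick g h = t}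

/-- Reduced spherical body. -/
def Reduced {n : ℕ} (R : Set (Esp n)) : Prop :=
  SphBody R ∧ ∀ Z, SphBody Z → Z ⊆ R → Z ≠ R → thick Z < thick R

/-- Geodesic diameter of a set on the sphere. -/
def sdiam {n : ℕ} (C : Set (Esp n)) : ℝ :=
  sSup {t | ∃ a ∈ C, ∃ b ∈ C, sdist a b = t}

/-- The hemisphere centered at `m` supports `C` at `p`. -/
def SupportsAt {n : ℕ} (C : Set (Esp n)) (m p : Esp n) : Prop :=
  m ∈ uSphere n ∧ C ⊆ Hemi m ∧ p ∈ C ∧ (inner ℝ m p : ℝ) = 0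

/-- The hemisphere centered at `m` supports `C`. -/
def Supports {n : ℕ} (C : Set (Esp n)) (m : Esp n) : Prop := ∃ p, SupportsAt C m p

/-- The width of `C` determined by the supporting hemisphere centered at `m`:
minimal thickness of a lune `M ∩ M*` over supporting hemispheres `M*` of `C`. -/
def sWidth {n : ℕ} (C : Set (Esp n)) (m : Esp n) : ℝ :=
  sInf {t | ∃ h, Supports C h ∧ IsLune m h ∧ C ⊆ Lune m h ∧ lthick m h = t}

/-- `C` is of constant width `w`. -/
def ConstWidth {n : ℕ} (C : Set (Esp n)) (w : ℝ) : Prop :=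
  ∀ m, Supports C m → sWidth C m = w

/-- Extreme point of a spherically convex set. -/
def ExtremeP {n : ℕ} (C : Set (Esp n)) (e : Esp n) : Prop :=
  e ∈ C ∧ ∀ a ∈ C, ∀ b ∈ C, e ∈ Arc a b → e = a ∨ e = b

/-- `p` is a smooth boundary point: exactly one hemisphere supports `C` at `p`. -/
def SmoothPoint {n : ℕ} (C : Set (Esp n)) (p : Esp n) : Prop :=
  ∃! m, SupportsAt C m p

/-- Strict convexity: the boundary contains no nondegenerate great-circle arc. -/
def StrictlyConvexS {n : ℕ} (C : Set (Esp n)) : Prop :=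
  ∀ a ∈ sphBoundary C, ∀ b ∈ sphBoundary C, Arc a b ⊆ sphBoundary C → a = b

end

/-!
Write `α = -cos Δ(R)`, which is positive since `Δ(R) > π/2`. Two hemispheres containing `R`
bound a lune of thickness at least `Δ(R)`, so their centres `x, y` satisfy `⟪x, y⟫ ≥ α`.
Reducedness gives a converse: if a vector `v`, positive at an interior point, satisfies
`⟪v, x⟫ ≥ α ‖v‖` for every such centre `x`, then the hemisphere of `v` contains `R`. Otherwise
`R ∩ Hemi v` is a proper convex subbody, hence strictly thinner than `R`; but by a Farkas-type
duality every hemisphere containing it has its centre in the closed cone spanned by `v` and the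
centres for `R`, and the bound `⟪x, y⟫ ≥ α ‖x‖ ‖y‖` survives nonnegative combinations and limits.

If two distinct hemispheres with centres `m₁, m₂` supported `R` at `p`, then `⟪m₁ + m₂, x⟫ ≥ 2α`
for every unit centre `x`, while `‖m₁ + m₂‖ < 2`. This slack lets us tilt `m₁ + m₂` slightly
away from `p` and keep the bound, so the tilted hemisphere contains `R` by the converse, although
it misses `p ∈ R`.
-/

open Real Set NormedSpace InnerProductGeometry ProperCone
open scoped NNReal RealInnerProductSpace

section InnerBound

variable {E : Type*} [NormedAddCommGroup E] [InnerProductSpace ℝ E] {α : ℝ} {S : Set E}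

theorem continuousOn_normalize : ContinuousOn (normalize : E → E) {0}ᶜ :=
  (continuousOn_id.norm.inv₀ fun _ hx => norm_ne_zero_iff.2 hx).smul continuousOn_id

theorem inner_pos_of_mem_interior {m x : E} (hm : m ≠ 0) (hS : ∀ z ∈ S, 0 ≤ ⟪z, m⟫)
    (hx : x ∈ interior S) : 0 < ⟪x, m⟫ := by
  obtain ⟨ε, hε, hball⟩ := Metric.mem_nhds_iff.1 (mem_interior_iff_mem_nhds.1 hx)
  have hm' : 0 < ‖m‖ := norm_pos_iff.2 hm
  set t := ε / (2 * ‖m‖)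
  have ht : 0 < t := by positivity
  have hmem : x - t • m ∈ S := hball <| by
    have : t * ‖m‖ = ε / 2 := by simp only [t]; field_simp
    rw [Metric.mem_ball, dist_eq_norm, sub_sub_cancel_left, norm_neg, norm_smul,
      Real.norm_of_nonneg ht.le, this]
    linarith
  have := hS _ hmem
  rw [inner_sub_left, real_inner_smul_left, real_inner_self_eq_norm_sq] at this
  nlinarith [mul_pos ht (pow_pos hm' 2)]

/-- Any two nonzero vectors of `S` make an angle at most `arccos α`. -/
def InnerBound (α : ℝ) (S : Set E) : Prop :=
  ∀ x ∈ S, ∀ y ∈ S, α * (‖x‖ * ‖y‖) ≤ ⟪x, y⟫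

theorem innerBound_of_normalize
    (h : ∀ x ∈ S, ∀ y ∈ S, x ≠ 0 → y ≠ 0 → α ≤ ⟪normalize x, normalize y⟫) :
    InnerBound α S := by
  intro x hx y hy
  rcases eq_or_ne x 0 with rfl | hx0
  · simp
  rcases eq_or_ne y 0 with rfl | hy0
  · simp
  rw [← norm_smul_normalize x, ← norm_smul_normalize y, real_inner_smul_left,
    real_inner_smul_right, norm_smul_normalize, norm_smul_normalize]
  nlinarith [h x hx y hy hx0 hy0, mul_nonneg (norm_nonneg x) (norm_nonneg y)]

theorem InnerBound.insert (h : InnerBound α S) (hα : α ≤ 1) {v : E}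
    (hv : ∀ x ∈ S, α * (‖v‖ * ‖x‖) ≤ ⟪v, x⟫) : InnerBound α (insert v S) := by
  rintro x (rfl | hx) y (rfl | hy)
  · rw [real_inner_self_eq_norm_mul_norm]
    exact mul_le_of_le_one_left (mul_self_nonneg _) hα
  · exact hv y hy
  · rw [mul_comm ‖x‖, real_inner_comm]
    exact hv x hx
  · exact h x hx y hy

def boundCone (hα : 0 ≤ α) (y : E) : PointedCone ℝ E where
  carrier := {x | α * (‖x‖ * ‖y‖) ≤ ⟪x, y⟫}
  add_mem' {x₁ x₂} h₁ h₂ := by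
    change α * (‖x₁ + x₂‖ * ‖y‖) ≤ ⟪x₁ + x₂, y⟫
    rw [inner_add_left]
    calc α * (‖x₁ + x₂‖ * ‖y‖) ≤ α * ((‖x₁‖ + ‖x₂‖) * ‖y‖) := by gcongr; exact norm_add_le _ _
      _ = α * (‖x₁‖ * ‖y‖) + α * (‖x₂‖ * ‖y‖) := by ring
      _ ≤ ⟪x₁, y⟫ + ⟪x₂, y⟫ := add_le_add h₁ h₂
  zero_mem' := by simp
  smul_mem' c x hx := by
    change α * (‖(c : ℝ) • x‖ * ‖y‖) ≤ ⟪(c : ℝ) • x, y⟫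
    rw [norm_smul, real_inner_smul_left, Real.norm_of_nonneg c.2]
    nlinarith [c.2, hx.out]

theorem InnerBound.closure_span (hα : 0 ≤ α) (h : InnerBound α S) :
    InnerBound α (closure (Submodule.span ℝ≥0 S : Set E)) := by
  have hcl : ∀ y, (∀ x ∈ S, α * (‖x‖ * ‖y‖) ≤ ⟪x, y⟫) →
      ∀ x ∈ closure (Submodule.span ℝ≥0 S : Set E), α * (‖x‖ * ‖y‖) ≤ ⟪x, y⟫ := fun y hy =>
    closure_minimal (Submodule.span_le.2 (show S ⊆ boundCone hα y from hy))
      (isClosed_le (by fun_prop : Continuous fun x : E => α * (‖x‖ * ‖y‖))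
        (by fun_prop : Continuous fun x : E => ⟪x, y⟫))
  have hsymm : ∀ x y : E, α * (‖x‖ * ‖y‖) ≤ ⟪x, y⟫ → α * (‖y‖ * ‖x‖) ≤ ⟪y, x⟫ := by
    intro x y hxy
    rwa [mul_comm ‖y‖, real_inner_comm]
  intro x hx y hy
  exact hsymm _ _ <| hcl x (fun z hz => hsymm _ _ (hcl z (fun x' hx' => h x' hx' z hz) x hx)) y hy

theorem mul_norm_mul_norm_le_inner_sub_smul {m p x : E} {t : ℝ} (hα : 0 ≤ α) (hp : ‖p‖ = 1)
    (ht₀ : 0 ≤ t) (ht : t * (1 + α) ≤ α * (2 - ‖m‖)) (hm : 2 * α * ‖x‖ ≤ ⟪m, x⟫) :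
    α * (‖m - t • p‖ * ‖x‖) ≤ ⟪m - t • p, x⟫ := by
  have hpx : ⟪p, x⟫ ≤ ‖x‖ := by simpa [hp] using real_inner_le_norm p x
  have hnorm : ‖m - t • p‖ ≤ ‖m‖ + t := by
    simpa [norm_smul, hp, abs_of_nonneg ht₀] using norm_sub_le m (t • p)
  rw [inner_sub_left, real_inner_smul_left]
  nlinarith [norm_nonneg x, mul_le_mul_of_nonneg_left hnorm (mul_nonneg hα (norm_nonneg x))]

end InnerBound

section Sphere

variable {n : ℕ}

theorem sdist_eq_angle {a b : Esp n} (ha : ‖a‖ = 1) (hb : ‖b‖ = 1) : sdist a b = angle a b := by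
  simp [sdist, angle, ha, hb]

theorem cos_sdist {a b : Esp n} (ha : ‖a‖ = 1) (hb : ‖b‖ = 1) : cos (sdist a b) = ⟪a, b⟫ := by
  rw [sdist_eq_angle ha hb, cos_angle, ha, hb, mul_one, div_one]

theorem mem_arc_iff {a b x : Esp n} (ha : ‖a‖ = 1) (hb : ‖b‖ = 1) (hab : b ≠ -a) :
    x ∈ Arc a b ↔ ‖x‖ = 1 ∧ x ∈ Submodule.span ℝ≥0 {a, b} := by
  have hπ : angle a b ≠ π := fun h => hab <| by
    have := cos_angle a b
    rw [h, cos_pi, ha, hb, mul_one, div_one, eq_comm, real_inner_comm] at this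
    exact (inner_eq_neg_one_iff_of_norm_eq_one hb ha).1 this
  have hsum : ∀ x : Esp n, ‖x‖ = 1 →
      (sdist a x + sdist x b = sdist a b ↔ x ∈ Submodule.span ℝ≥0 {a, b}) := fun x hx => by
    rw [sdist_eq_angle ha hx, sdist_eq_angle hx hb, sdist_eq_angle ha hb, eq_comm,
      angle_eq_angle_add_angle_iff (norm_ne_zero_iff.1 (by simp [hx])), or_iff_right hπ]
  exact ⟨fun ⟨hx, h⟩ => ⟨hx, (hsum x hx).1 h⟩, fun ⟨hx, h⟩ => ⟨hx, (hsum x hx).2 h⟩⟩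

theorem lthick_eq {g h : Esp n} (hgh : IsLune g h) : lthick g h = π - sdist g h := by
  obtain ⟨hg, hh, hne, hne'⟩ := hgh
  replace hg : ‖g‖ = 1 := hg
  replace hh : ‖h‖ = 1 := hh
  set c := ⟪g, h⟫ with hc
  have hc1 : c < 1 := lt_of_le_of_ne (by simpa [hg, hh] using real_inner_le_norm g h)
    fun h1 => hne ((inner_eq_one_iff_of_norm_eq_one hg hh).1 h1)
  have hcm1 : -1 < c := lt_of_le_of_ne (by nlinarith [abs_real_inner_le_norm g h, neg_abs_le c])
    fun h1 => hne' ((inner_eq_neg_one_iff_of_norm_eq_one hg hh).1 h1.symm)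
  have hinner : ∀ a b : Esp n, ‖a‖ = 1 → ‖b‖ = 1 → ⟪a, b⟫ = c →
      ‖b - c • a‖ ^ 2 = 1 - c ^ 2 := fun a b ha hb hab => by
    rw [← real_inner_self_eq_norm_sq]
    simp only [inner_sub_left, inner_sub_right, real_inner_smul_left, real_inner_smul_right,
      real_inner_self_eq_norm_sq a, real_inner_self_eq_norm_sq b, ha, hb, real_inner_comm a b, hab]
    ring
  have hu := hinner g h hg hh rfl
  have hv := hinner h g hh hg (real_inner_comm g h)
  have hnorm : ‖h - c • g‖ * ‖g - c • h‖ = 1 - c ^ 2 := by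
    rw [(pow_left_inj₀ (norm_nonneg _) (norm_nonneg _) two_ne_zero).1 (hu.trans hv.symm), ← sq, hv]
  have huv : ⟪h - c • g, g - c • h⟫ = -c * (1 - c ^ 2) := by
    simp only [inner_sub_left, inner_sub_right, real_inner_smul_left, real_inner_smul_right,
      real_inner_self_eq_norm_sq g, real_inner_self_eq_norm_sq h, hg, hh, real_inner_comm g h, ← hc]
    ring
  have hpos : 0 < 1 - c ^ 2 := by nlinarith
  rw [lthick, sdist, scCenter, scCenter, real_inner_comm g h, ← hc, real_inner_smul_left,
    real_inner_smul_right, huv, ← mul_assoc, ← mul_inv, hnorm, sdist,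
    show (1 - c ^ 2)⁻¹ * (-c * (1 - c ^ 2)) = -c by field_simp, arccos_neg]

theorem bddBelow_lthick (C : Set (Esp n)) :
    BddBelow {t | ∃ g h, IsLune g h ∧ C ⊆ Lune g h ∧ lthick g h = t} :=
  ⟨0, by rintro _ ⟨g, h, -, -, rfl⟩; exact arccos_nonneg _⟩

theorem thick_le {C : Set (Esp n)} {g h : Esp n} (hgh : IsLune g h) (hC : C ⊆ Lune g h) :
    thick C ≤ lthick g h :=
  csInf_le (bddBelow_lthick C) ⟨g, h, hgh, hC, rfl⟩

theorem thick_le_pi (C : Set (Esp n)) : thick C ≤ π := by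
  rcases Set.eq_empty_or_nonempty {t | ∃ g h, IsLune g h ∧ C ⊆ Lune g h ∧ lthick g h = t}
    with hS | ⟨_, g, h, hgh, hC, rfl⟩
  · rw [thick, hS, Real.sInf_empty]
    exact pi_pos.le
  · exact (thick_le hgh hC).trans (arccos_le_pi _)

theorem exists_lune_of_thick_pos {C : Set (Esp n)} (hC : 0 < thick C) :
    ∃ g h, IsLune g h ∧ C ⊆ Lune g h := by
  by_contra! hno
  have hS : {t | ∃ g h, IsLune g h ∧ C ⊆ Lune g h ∧ lthick g h = t} = ∅ :=
    Set.eq_empty_of_forall_notMem fun _ ⟨g, h, hgh, hCgh, _⟩ => hno g h hgh hCgh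
  rw [thick, hS, Real.sInf_empty] at hC
  exact lt_irrefl _ hC

theorem exists_lune_lthick_lt {C : Set (Esp n)} {t : ℝ} (hC : ∃ g h, IsLune g h ∧ C ⊆ Lune g h)
    (ht : thick C < t) : ∃ g h, IsLune g h ∧ C ⊆ Lune g h ∧ lthick g h < t := by
  obtain ⟨g, h, hgh, hCgh⟩ := hC
  obtain ⟨_, ⟨g, h, hgh, hCgh, rfl⟩, hlt⟩ :=
    (csInf_lt_iff (bddBelow_lthick C) ⟨_, g, h, hgh, hCgh, rfl⟩).1 ht
  exact ⟨g, h, hgh, hCgh, hlt⟩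

theorem inner_lt_neg_cos_iff {g h : Esp n} (hgh : IsLune g h) {t : ℝ} (ht₀ : 0 ≤ t)
    (ht : t ≤ π) : ⟪g, h⟫ < -cos t ↔ lthick g h < t := by
  have hs : sdist g h ∈ Icc 0 π := ⟨arccos_nonneg _, arccos_le_pi _⟩
  rw [lthick_eq hgh, ← cos_sdist hgh.1 hgh.2.1, ← cos_pi_sub,
    strictAntiOn_cos.lt_iff_gt hs ⟨by linarith, by linarith⟩]
  constructor <;> intro <;> linarith

theorem isClosed_hemi (v : Esp n) : IsClosed (Hemi v) :=
  show IsClosed ({x | ‖x‖ = 1} ∩ {x | 0 ≤ ⟪v, x⟫}) from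
    (isClosed_eq continuous_norm continuous_const).inter
      (isClosed_le continuous_const (continuous_const.inner continuous_id))

theorem thick_nonneg (C : Set (Esp n)) : 0 ≤ thick C :=
  Real.sInf_nonneg fun _ ⟨_, _, _, _, ht⟩ => ht ▸ arccos_nonneg _

theorem neg_cos_thick_nonneg {C : Set (Esp n)} (h : π / 2 ≤ thick C) : 0 ≤ -cos (thick C) :=
  neg_nonneg.2 (cos_nonpos_of_pi_div_two_le_of_le h (by linarith [thick_le_pi C, pi_pos]))

theorem neg_cos_thick_pos {C : Set (Esp n)} (h : π / 2 < thick C) : 0 < -cos (thick C) :=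
  neg_pos.2 (cos_neg_of_pi_div_two_lt_of_lt h (by linarith [thick_le_pi C, pi_pos]))

theorem mem_innerDual_of_subset_hemi {C : Set (Esp n)} {m : Esp n} (h : C ⊆ Hemi m) :
    m ∈ innerDual C :=
  mem_innerDual.2 fun x hx => by rw [real_inner_comm]; exact (h hx).2

theorem normalize_mem_innerDual {C : Set (Esp n)} {m : Esp n} (hm : m ∈ innerDual C) :
    NormedSpace.normalize m ∈ innerDual C :=
  mem_innerDual.2 fun x hx => by
    rw [NormedSpace.normalize, real_inner_smul_right]
    exact mul_nonneg (by positivity) (hm hx)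

end Sphere

namespace SphConvex

variable {n : ℕ} {R : Set (Esp n)} (hR : SphConvex R)
include hR

theorem normalize_add_mem {a b : Esp n} (ha : a ∈ R) (hb : b ∈ R) {s t : ℝ} (hs : 0 ≤ s)
    (ht : 0 ≤ t) (hst : s • a + t • b ≠ 0) : normalize (s • a + t • b) ∈ R := by
  refine hR.2.2 a ha b hb ((mem_arc_iff (hR.1 ha) (hR.1 hb) ?_).2 ⟨norm_normalize hst, ?_⟩)
  · rintro rfl
    exact hR.2.1 a ha hb
  · rw [NormedSpace.normalize, Submodule.mem_span_pair]
    exact ⟨⟨‖s • a + t • b‖⁻¹ * s, by positivity⟩, ⟨‖s • a + t • b‖⁻¹ * t, by positivity⟩,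
      by rw [smul_add, smul_smul, smul_smul]; rfl⟩

def cone : PointedCone ℝ (Esp n) where
  carrier := {v | v = 0 ∨ NormedSpace.normalize v ∈ R}
  add_mem' {v w} hv hw := by
    rcases hv with rfl | hv
    · simpa using hw
    rcases hw with rfl | hw
    · simpa using Or.inr hv
    by_cases h0 : v + w = 0
    · exact Or.inl h0
    refine Or.inr ?_
    rw [← norm_smul_normalize v, ← norm_smul_normalize w] at h0 ⊢
    exact hR.normalize_add_mem hv hw (norm_nonneg v) (norm_nonneg w) h0
  zero_mem' := Or.inl rfl
  smul_mem' c v hv := by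
    change (c : ℝ) • v = 0 ∨ NormedSpace.normalize ((c : ℝ) • v) ∈ R
    rcases eq_or_lt_of_le c.2 with hc | hc
    · exact Or.inl (by rw [← hc, zero_smul])
    · rcases hv with rfl | hv
      · exact Or.inl (smul_zero _)
      · exact Or.inr (by rwa [normalize_smul_of_pos hc])

theorem mem_cone {v : Esp n} : v ∈ hR.cone ↔ v = 0 ∨ NormedSpace.normalize v ∈ R := Iff.rfl

theorem subset_cone : R ⊆ hR.cone := fun x hx =>
  Or.inr (by rwa [normalize_eq_self_of_norm_eq_one (hR.1 hx)])

theorem isClosed_cone (hc : IsClosed R) : IsClosed (hR.cone : Set (Esp n)) := by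
  have hcompl : (hR.cone : Set (Esp n))ᶜ = {0}ᶜ ∩ NormedSpace.normalize ⁻¹' Rᶜ := by
    ext v
    simp [mem_cone, not_or]
  rw [← isOpen_compl_iff, hcompl]
  exact continuousOn_normalize.isOpen_inter_preimage isOpen_compl_singleton hc.isOpen_compl

theorem mem_cone_of_mem_innerDual_innerDual (hc : IsClosed R) {y : Esp n}
    (hy : y ∈ innerDual (innerDual R : Set (Esp n))) : y ∈ hR.cone := by
  by_contra hy'
  obtain ⟨z, hz, hyz⟩ := hyperplane_separation' ⟨hR.cone, hR.isClosed_cone hc⟩ hy'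
  have : 0 ≤ ⟪z, y⟫ := hy ((mem_innerDual).2 fun x hx => hz x (hR.subset_cone hx))
  rw [real_inner_comm] at this
  linarith

theorem mem_interior_cone {x : Esp n} (hx : x ∈ sphInterior R) :
    x ∈ interior (hR.cone : Set (Esp n)) := by
  obtain ⟨hx1, ε, hε, hball⟩ := hx
  have hx0 : x ≠ 0 := norm_ne_zero_iff.1 (by rw [hx1]; exact one_ne_zero)
  have hcont : Filter.Tendsto NormedSpace.normalize (nhds x) (nhds x) := by
    simpa [normalize_eq_self_of_norm_eq_one hx1] using
      (continuousOn_normalize.continuousAt (isOpen_compl_singleton.mem_nhds hx0)).tendsto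
  rw [mem_interior_iff_mem_nhds]
  filter_upwards [isOpen_compl_singleton.mem_nhds hx0, hcont (Metric.ball_mem_nhds x hε)]
    with v hv0 hv
  exact Or.inr (hball _ (norm_normalize hv0) hv)

theorem mem_sphInterior_of_mem_interior_cone {x : Esp n} (hx : ‖x‖ = 1)
    (hxi : x ∈ interior (hR.cone : Set (Esp n))) : x ∈ sphInterior R := by
  obtain ⟨ε, hε, hball⟩ := Metric.mem_nhds_iff.1 (mem_interior_iff_mem_nhds.1 hxi)
  refine ⟨hx, ε, hε, fun y hy hyx => ?_⟩
  rcases hball hyx with h0 | hyR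
  · simp [h0, uSphere] at hy
  · rwa [normalize_eq_self_of_norm_eq_one hy] at hyR

theorem inner_nonneg_of_mem_cone {m z : Esp n} (hm : m ∈ innerDual R) (hz : z ∈ hR.cone) :
    0 ≤ ⟪z, m⟫ := by
  rcases hz with rfl | hz
  · simp
  · rw [← norm_smul_normalize z, real_inner_smul_left]
    exact mul_nonneg (norm_nonneg z) (hm hz)

theorem innerDual_inter_hemi_subset (hc : IsClosed R) (v : Esp n) :
    (innerDual (R ∩ Hemi v) : Set (Esp n)) ⊆
      closure (Submodule.span ℝ≥0 (insert v (innerDual R : Set (Esp n))) : Set (Esp n)) := by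
  intro w hw
  by_contra hw'
  obtain ⟨y, hy, hwy⟩ := hyperplane_separation'
    (Submodule.span ℝ≥0 (insert v (innerDual R : Set (Esp n)))).closure hw'
  have hgen : ∀ x ∈ insert v (innerDual R : Set (Esp n)), 0 ≤ ⟪x, y⟫ := fun x hx =>
    hy x (subset_closure (Submodule.subset_span hx))
  -- by the bipolar theorem for the cone over `R`, `y` is a multiple of a point of `R ∩ Hemi v`
  rcases hR.mem_cone_of_mem_innerDual_innerDual hc
    (mem_innerDual.2 fun x hx => hgen x (Or.inr hx)) with rfl | hyR
  · simp at hwy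
  have hy0 : y ≠ 0 := by rintro rfl; simp at hwy
  have hvy : 0 ≤ ⟪v, NormedSpace.normalize y⟫ := by
    rw [NormedSpace.normalize, real_inner_smul_right]
    exact mul_nonneg (by positivity) (hgen v (mem_insert v _))
  have hyw : 0 ≤ ⟪NormedSpace.normalize y, w⟫ := hw ⟨hyR, norm_normalize hy0, hvy⟩
  rw [← norm_smul_normalize y, real_inner_smul_right, real_inner_comm] at hwy
  nlinarith [norm_nonneg y]

end SphConvex

namespace SphBody

variable {n : ℕ} {R : Set (Esp n)} (hR : SphBody R)
include hR

theorem inner_pos {m x : Esp n} (hm : m ∈ innerDual R) (hm0 : m ≠ 0)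
    (hx : x ∈ sphInterior R) : 0 < ⟪x, m⟫ :=
  inner_pos_of_mem_interior hm0 (fun _ hz => hR.1.inner_nonneg_of_mem_cone hm hz)
    (hR.1.mem_interior_cone hx)

theorem innerBound_innerDual : InnerBound (-cos (thick R)) (innerDual R : Set (Esp n)) := by
  obtain ⟨x₀, hx₀⟩ := hR.2.2
  refine innerBound_of_normalize fun x hx y hy hx0 hy0 => ?_
  set a := NormedSpace.normalize x
  set b := NormedSpace.normalize y
  have ha : a ∈ innerDual R := normalize_mem_innerDual hx
  have hb : b ∈ innerDual R := normalize_mem_innerDual hy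
  have ha1 : ‖a‖ = 1 := norm_normalize hx0
  have hb1 : ‖b‖ = 1 := norm_normalize hy0
  by_cases hab : a = b
  · rw [hab, real_inner_self_eq_norm_sq, hb1, one_pow, neg_le]
    exact neg_one_le_cos _
  have hab' : a ≠ -b := by
    intro h
    have hxa := hR.inner_pos ha (norm_ne_zero_iff.1 (ha1 ▸ one_ne_zero)) hx₀
    have hxb := hR.inner_pos hb (norm_ne_zero_iff.1 (hb1 ▸ one_ne_zero)) hx₀
    rw [h, inner_neg_right] at hxa
    linarith
  have hlune : IsLune a b := ⟨ha1, hb1, hab, hab'⟩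
  have hsub : R ⊆ Lune a b := fun z hz =>
    ⟨⟨hR.1.1 hz, by rw [real_inner_comm]; exact ha hz⟩,
      ⟨hR.1.1 hz, by rw [real_inner_comm]; exact hb hz⟩⟩
  exact not_lt.1 fun h => ((inner_lt_neg_cos_iff hlune (thick_nonneg R) (thick_le_pi R)).1 h).not_ge
    (thick_le hlune hsub)

theorem inter_hemi {x₀ v : Esp n} (hx₀ : x₀ ∈ sphInterior R) (hv : 0 < ⟪v, x₀⟫) :
    SphBody (R ∩ Hemi v) := by
  obtain ⟨⟨hs, hanti, harc⟩, hc, -⟩ := hR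
  refine ⟨⟨fun x hx => hs hx.1, fun x hx h => hanti x hx.1 h.1,
    fun a ha b hb x hx => ⟨harc a ha.1 b hb.1 hx, ?_⟩⟩, hc.inter (isClosed_hemi v), x₀, ?_⟩
  · obtain ⟨hx1, hspan⟩ := (mem_arc_iff (hs ha.1) (hs hb.1) fun h => hanti a ha.1 (h ▸ hb.1)).1 hx
    have hab : ({a, b} : Set (Esp n)) ⊆ innerDual {v} := by
      rintro _ (rfl | rfl) <;> refine mem_innerDual.2 fun x hx => ?_ <;> rw [mem_singleton_iff.1 hx]
      exacts [ha.2.2, hb.2.2]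
    exact ⟨hx1, by simpa using Submodule.span_le.2 hab hspan⟩
  · obtain ⟨hx1, ε, hε, hball⟩ := hx₀
    have hopen : IsOpen {x : Esp n | 0 < ⟪v, x⟫} :=
      isOpen_lt continuous_const (continuous_const.inner continuous_id)
    obtain ⟨δ, hδ, hδv⟩ := Metric.isOpen_iff.1 hopen x₀ hv
    exact ⟨hx1, min ε δ, lt_min hε hδ, fun y hy hyx =>
      ⟨hball y hy (hyx.trans_le (min_le_left _ _)), hy,
        (hδv (Metric.mem_ball.2 (hyx.trans_le (min_le_right _ _)))).le⟩⟩

theorem exists_supportsAt {p : Esp n} (hp : p ∈ sphBoundary R) : ∃ m, SupportsAt R m p := by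
  obtain ⟨hpR, hpi⟩ := hp
  obtain ⟨x₀, hx₀⟩ := hR.2.2
  obtain ⟨f, hf0, hf⟩ := geometric_hahn_banach_of_nonempty_interior_point hR.1.cone.convex
    (fun h => hpi (hR.1.mem_sphInterior_of_mem_interior_cone (hR.1.1 hpR) h))
    ⟨x₀, hR.1.mem_interior_cone hx₀⟩
  have hfp : f p = 0 := by
    have h2p := hf _ (add_mem (hR.1.subset_cone hpR) (hR.1.subset_cone hpR))
    have h0 := hf 0 (zero_mem _)
    rw [map_add] at h2p
    rw [map_zero] at h0
    linarith
  set y := (InnerProductSpace.toDual ℝ (Esp n)).symm f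
  have hy : ∀ x, ⟪NormedSpace.normalize y, x⟫ = ‖y‖⁻¹ * f x := fun x => by
    rw [NormedSpace.normalize, real_inner_smul_left, InnerProductSpace.toDual_symm_apply]
  have hy0 : y ≠ 0 := by simpa [y] using hf0
  refine ⟨-NormedSpace.normalize y, ?_, fun x hx => ⟨hR.1.1 hx, ?_⟩, hpR, ?_⟩
  · exact (norm_neg _).trans (norm_normalize hy0)
  · rw [inner_neg_left, hy, neg_nonneg]
    exact mul_nonpos_of_nonneg_of_nonpos (by positivity) (hfp ▸ hf x (hR.1.subset_cone hx))
  · rw [inner_neg_left, hy, hfp, mul_zero, neg_zero]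

theorem exists_tilt_of_supportsAt (hw : π / 2 < thick R) {p m₁ m₂ x₀ : Esp n} (hne : m₁ ≠ m₂)
    (h₁ : SupportsAt R m₁ p) (h₂ : SupportsAt R m₂ p) (hx₀ : x₀ ∈ sphInterior R) :
    ∃ v, 0 < ⟪v, x₀⟫ ∧ ⟪p, v⟫ < 0 ∧
      InnerBound (-cos (thick R)) (insert v (innerDual R : Set (Esp n))) := by
  obtain ⟨hm₁, hR₁, hpR, hp₁⟩ := h₁
  obtain ⟨hm₂, hR₂, -, hp₂⟩ := h₂
  replace hm₁ : ‖m₁‖ = 1 := hm₁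
  replace hm₂ : ‖m₂‖ = 1 := hm₂
  have hp : ‖p‖ = 1 := hR.1.1 hpR
  have hx₀1 : ‖x₀‖ = 1 := hx₀.1
  set α := -cos (thick R)
  have hα : 0 < α := neg_cos_thick_pos hw
  have hN := hR.innerBound_innerDual
  have hN₁ := mem_innerDual_of_subset_hemi hR₁
  have hN₂ := mem_innerDual_of_subset_hemi hR₂
  have hr : ‖m₁ + m₂‖ < 2 := by
    have := norm_add_lt_of_not_sameRay (mt (sameRay_iff_of_norm_eq (hm₁.trans hm₂.symm)).1 hne)
    rwa [hm₁, hm₂, one_add_one_eq_two] at this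
  have hc : 0 < ⟪m₁ + m₂, x₀⟫ := by
    rw [inner_add_left, real_inner_comm x₀ m₁, real_inner_comm x₀ m₂]
    exact add_pos (hR.inner_pos hN₁ (norm_ne_zero_iff.1 (hm₁ ▸ one_ne_zero)) hx₀)
      (hR.inner_pos hN₂ (norm_ne_zero_iff.1 (hm₂ ▸ one_ne_zero)) hx₀)
  -- small enough to keep `v` positive at `x₀`, and to stay within the slack `‖m₁ + m₂‖ < 2`
  set t := min (⟪m₁ + m₂, x₀⟫ / 2) (α * (2 - ‖m₁ + m₂‖) / (1 + α))
  have ht : 0 < t := lt_min (by linarith) (by apply div_pos <;> nlinarith)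
  refine ⟨m₁ + m₂ - t • p, ?_, ?_, hN.insert (neg_le.2 (neg_one_le_cos _)) fun x hx => ?_⟩
  · have hpx₀ : ⟪p, x₀⟫ ≤ 1 := by simpa [hp, hx₀1] using real_inner_le_norm p x₀
    rw [inner_sub_left, real_inner_smul_left]
    nlinarith [min_le_left (⟪m₁ + m₂, x₀⟫ / 2) (α * (2 - ‖m₁ + m₂‖) / (1 + α))]
  · rw [inner_sub_right, inner_add_right, real_inner_smul_right, real_inner_self_eq_norm_sq, hp,
      real_inner_comm m₁ p, real_inner_comm m₂ p, hp₁, hp₂]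
    linarith
  · have h₁x := hN m₁ hN₁ x hx
    have h₂x := hN m₂ hN₂ x hx
    rw [hm₁, one_mul] at h₁x
    rw [hm₂, one_mul] at h₂x
    refine mul_norm_mul_norm_le_inner_sub_smul hα.le hp ht.le
      ((le_div_iff₀ (by linarith)).1 (min_le_right _ _)) ?_
    rw [inner_add_left]
    linarith

end SphBody

namespace Reduced

variable {n : ℕ} {R : Set (Esp n)} (hR : Reduced R)
include hR

theorem mem_innerDual_of_innerBound (hw : π / 2 ≤ thick R) {x₀ v : Esp n}
    (hx₀ : x₀ ∈ sphInterior R) (hv : 0 < ⟪v, x₀⟫)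
    (hbound : InnerBound (-cos (thick R)) (insert v (innerDual R : Set (Esp n)))) :
    v ∈ innerDual R := by
  by_contra hvR
  obtain ⟨z, hzR, hz⟩ : ∃ z ∈ R, ⟪z, v⟫ < 0 := by simpa [mem_innerDual] using hvR
  have hZR : R ∩ Hemi v ≠ R := fun h => by
    have hzZ : z ∈ R ∩ Hemi v := by rw [h]; exact hzR
    rw [real_inner_comm] at hz
    exact hzZ.2.2.not_gt hz
  have hlune : ∃ g h, IsLune g h ∧ R ∩ Hemi v ⊆ Lune g h := by
    obtain ⟨g, h, hgh, hRgh⟩ := exists_lune_of_thick_pos (by linarith [pi_pos] : 0 < thick R)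
    exact ⟨g, h, hgh, inter_subset_left.trans hRgh⟩
  obtain ⟨g, h, hgh, hZgh, hlt⟩ :=
    exists_lune_lthick_lt hlune (hR.2 _ (hR.1.inter_hemi hx₀ hv) inter_subset_left hZR)
  have hα := neg_cos_thick_nonneg hw
  have hmem : ∀ m, R ∩ Hemi v ⊆ Hemi m →
      m ∈ closure (Submodule.span ℝ≥0 (insert v (innerDual R : Set (Esp n))) : Set (Esp n)) :=
    fun m hm => hR.1.1.innerDual_inter_hemi_subset hR.1.2.1 v (mem_innerDual_of_subset_hemi hm)
  have hgh' := hbound.closure_span hα g (hmem g fun z hz => (hZgh hz).1)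
    h (hmem h fun z hz => (hZgh hz).2)
  rw [show ‖g‖ = 1 from hgh.1, show ‖h‖ = 1 from hgh.2.1, mul_one, mul_one] at hgh'
  exact ((inner_lt_neg_cos_iff hgh (thick_nonneg R) (thick_le_pi R)).2 hlt).not_ge hgh'

theorem supportsAt_unique (hw : π / 2 < thick R) {p m₁ m₂ : Esp n}
    (h₁ : SupportsAt R m₁ p) (h₂ : SupportsAt R m₂ p) : m₁ = m₂ := by
  by_contra hne
  obtain ⟨x₀, hx₀⟩ := hR.1.2.2
  obtain ⟨v, hvx₀, hpv, hbound⟩ := hR.1.exists_tilt_of_supportsAt hw hne h₁ h₂ hx₀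
  exact (hR.mem_innerDual_of_innerBound hw.le hx₀ hvx₀ hbound h₁.2.2.1).not_gt hpv

end Reduced

/-- Every reduced spherical convex body R ⊂ S^d of thickness greater than π/2
is smooth: at every boundary point there is exactly one supporting hemisphere. -/
theorem stmt_15 (d : ℕ) (R : Set (Esp (d + 1))) (hR : Reduced R)
    (ht : Real.pi / 2 < thick R) :
    ∀ p ∈ sphBoundary R, SmoothPoint R p := by
  intro p hp
  obtain ⟨m, hm⟩ := hR.1.exists_supportsAt hp
  exact ⟨m, hm, fun m' hm' => hR.supportsAt_unique ht hm' hm⟩
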